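/- arXiv:2403.18503 — 4 statements merged into one kernel-verified Lean document; each statement's English description precedes it below -/
import Mathlib

section
/- Let K, M_X, M_Y be positive integers with M_X ≥ K. For d ∈ {0,1}, suppose Γ_X and Γ'_X are M_X×K column-stochastic real matrices of rank K; Γ_{Y,d} and Γ'_{Y,d} are M_Y×K column-stochastic real matrices; Λ_d and Λ'_d are K×K column-stochastic invertible real matrices; and both tuples satisfy the no-repeated-eigenvalue condition: for all k ≠ k' there exists a row index y with Γ_{Y,0}[y,k] ≠ Γ_{Y,0}[y,k'] and a row index y' with Γ_{Y,1}[y',k] ≠ Γ_{Y,1}[y',k'] (and likewise for the primed matrices). If for each d ∈ {0,1} and all indices y, x, z one has ∑_{k=1}^K Γ_{Y,d}[y,k]·Γ_X[x,k]·Λ_d[k,z] = ∑_{k=1}^K Γ'_{Y,d}[y,k]·Γ'_X[x,k]·Λ'_d[k,z], then there exists a permutation σ of {1,…,K} such that for all k and both d ∈ {0,1}: column k of Γ'_X equals column σ(k) of Γ_X, column k of Γ'_{Y,d} equals column σ(k) of Γ_{Y,d}, and row k of Λ'_d equals row σ(k) of Λ_d. -/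
/-!
Summing the observed arrays over `y` (the columns of `Γ_{Y,d}` sum to one) gives
`Γ_X Λ_d = Γ'_X Λ'_d`, so `Γ'_X = Γ_X R` with `R = Λ_0 Λ'_0⁻¹`. Cancelling `Γ_X`, which has full
column rank, gives `Λ_d = R Λ'_d` and `diag(Γ_{Y,d}[y,·]) R = R diag(Γ'_{Y,d}[y,·])`, so
`R k j ≠ 0` forces column `k` of `Γ_{Y,d}` to equal column `j` of `Γ'_{Y,d}`. As the columns of
`Γ_{Y,0}` and of `Γ'_{Y,0}` are pairwise distinct, `R` has at most one nonzero entry in each row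
and column; its columns sum to one because those of `Γ_X` and `Γ'_X` do, so `R` is the matrix of
a permutation.
-/

open Matrix Finset

namespace Matrix

variable {ι l m n α : Type*}

theorem mul_right_injective_of_rank_eq_card {K : Type*} [Field K] [Fintype n]
    {A : Matrix m n K} (hA : A.rank = Fintype.card n) :
    Function.Injective fun B : Matrix n l K => A * B := by
  cases isEmpty_or_nonempty l
  · exact Function.injective_of_subsingleton _
  refine mul_right_injective_iff_mulVec_injective.2 (mulVec_injective_iff.2 ?_)
  rw [linearIndependent_iff_card_eq_finrank_span, ← hA, rank_eq_finrank_span_cols]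
  rfl

theorem sum_mul_apply_of_sum_eq_one [Fintype m] [Fintype n] [NonAssocSemiring α]
    {A : Matrix m n α} (hA : ∀ k, ∑ i, A i k = 1) (R : Matrix n l α) (j : l) :
    ∑ i, (A * R) i j = ∑ k, R k j := by
  simp only [mul_apply]
  rw [sum_comm]
  simp only [← Finset.sum_mul, hA, one_mul]

section DiagonalMul

variable [Fintype n] [DecidableEq n]

theorem mul_diagonal_mul_apply [CommSemiring α] (A : Matrix m n α) (v : n → α)
    (B : Matrix n l α) (i : m) (j : l) :
    (A * diagonal v * B) i j = ∑ k, v k * A i k * B k j := by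
  rw [mul_apply]
  simp only [mul_diagonal]
  exact sum_congr rfl fun k _ => by ring

theorem sum_mul_diagonal_mul_eq_mul [Fintype ι] [NonAssocSemiring α] (A : Matrix m n α)
    (B : Matrix n l α) {G : Matrix ι n α} (hG : ∀ k, ∑ i, G i k = 1) :
    ∑ i, A * diagonal (G i) * B = A * B := by
  have hdiag : ∑ i, diagonal (G i) = 1 := by
    ext k k'
    by_cases h : k = k' <;> simp [sum_apply, one_apply, h, hG]
  rw [← Matrix.sum_mul, ← Matrix.mul_sum, hdiag, Matrix.mul_one]

theorem eq_of_diagonal_mul_eq_mul_diagonal [CommSemiring α] [IsRightCancelMulZero α]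
    {a b : n → α} {R : Matrix n n α} (h : diagonal a * R = R * diagonal b) {k j : n}
    (hR : R k j ≠ 0) : a k = b j := by
  have hkj := congrFun₂ h k j
  rw [diagonal_mul, mul_diagonal, mul_comm (R k j)] at hkj
  exact mul_right_cancel₀ hR hkj

theorem exists_perm_eq_toMatrix_of_sum_eq_one [NonAssocSemiring α] [Nontrivial α]
    {R : Matrix n n α} (hsum : ∀ j, ∑ k, R k j = 1)
    (hrow : ∀ k j j', R k j ≠ 0 → R k j' ≠ 0 → j = j')
    (hcol : ∀ k k' j, R k j ≠ 0 → R k' j ≠ 0 → k = k') :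
    ∃ σ : Equiv.Perm n, R = σ.symm.toPEquiv.toMatrix := by
  have hex : ∀ j, ∃ k, R k j ≠ 0 := fun j => by
    obtain ⟨k, -, hk⟩ := exists_ne_zero_of_sum_ne_zero (s := univ) (hsum j ▸ one_ne_zero)
    exact ⟨k, hk⟩
  choose π hπ using hex
  have hπ_inj : Function.Injective π := fun j j' h => hrow _ j j' (hπ j) (h ▸ hπ j')
  have hzero : ∀ k j, k ≠ π j → R k j = 0 := fun k j hk =>
    not_not.1 fun h => hk (hcol k (π j) j h (hπ j))
  have hone : ∀ j, R (π j) j = 1 := fun j => by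
    rw [← hsum j, sum_eq_single (π j) (fun k _ hk => hzero k j hk) (by simp)]
  refine ⟨Equiv.ofBijective π hπ_inj.bijective_of_finite, ext fun k j => ?_⟩
  simp only [PEquiv.toMatrix_apply, Equiv.toPEquiv_apply, Option.mem_some_iff,
    Equiv.symm_apply_eq, Equiv.ofBijective_apply]
  split_ifs with h
  · rw [h, hone]
  · exact hzero k j h

theorem exists_perm_of_diagonal_mul_eq_mul_diagonal [CommSemiring α] [IsDomain α]
    {G G' : Matrix ι n α} (hG : Function.Injective Gᵀ) (hG' : Function.Injective G'ᵀ)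
    {R : Matrix n n α} (hcomm : ∀ i, diagonal (G i) * R = R * diagonal (G' i))
    (hsum : ∀ j, ∑ k, R k j = 1) :
    ∃ σ : Equiv.Perm n, R = σ.symm.toPEquiv.toMatrix := by
  refine exists_perm_eq_toMatrix_of_sum_eq_one hsum (fun k j j' h h' => hG' ?_)
    (fun k k' j h h' => hG ?_)
  · exact funext fun i => (eq_of_diagonal_mul_eq_mul_diagonal (hcomm i) h).symm.trans
      (eq_of_diagonal_mul_eq_mul_diagonal (hcomm i) h')
  · exact funext fun i => (eq_of_diagonal_mul_eq_mul_diagonal (hcomm i) h).trans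
      (eq_of_diagonal_mul_eq_mul_diagonal (hcomm i) h').symm

end DiagonalMul

end Matrix

theorem nmf_identification_up_to_permutation_general
    (K MX MY : ℕ)
    (ΓX ΓX' : Matrix (Fin MX) (Fin K) ℝ)
    (ΓY ΓY' : Fin 2 → Matrix (Fin MY) (Fin K) ℝ)
    (Λ Λ' : Fin 2 → Matrix (Fin K) (Fin K) ℝ)
    -- column-stochasticity
    (hΓX_sum : ∀ k, ∑ x, ΓX x k = 1)
    (hΓX'_sum : ∀ k, ∑ x, ΓX' x k = 1)
    (hΓY_sum : ∀ d k, ∑ y, ΓY d y k = 1)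
    (hΓY'_sum : ∀ d k, ∑ y, ΓY' d y k = 1)
    -- full rank conditions
    (hΓX_rank : ΓX.rank = K)
    (hΛ'_inv : ∀ d, IsUnit (Λ' d))
    -- no repeated eigenvalue
    (hnre : ∀ k k' : Fin K, k ≠ k' →
      (∃ y, ΓY 0 y k ≠ ΓY 0 y k') ∧ (∃ y', ΓY 1 y' k ≠ ΓY 1 y' k'))
    (hnre' : ∀ k k' : Fin K, k ≠ k' →
      (∃ y, ΓY' 0 y k ≠ ΓY' 0 y k') ∧ (∃ y', ΓY' 1 y' k ≠ ΓY' 1 y' k'))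
    -- the two factorizations give the same observed arrays
    (heq : ∀ (d : Fin 2) (y : Fin MY) (x : Fin MX) (z : Fin K),
      ∑ k, ΓY d y k * ΓX x k * Λ d k z = ∑ k, ΓY' d y k * ΓX' x k * Λ' d k z) :
    ∃ σ : Equiv.Perm (Fin K), ∀ k : Fin K,
      (∀ x, ΓX' x k = ΓX x (σ k)) ∧
      (∀ d y, ΓY' d y k = ΓY d y (σ k)) ∧
      (∀ d z, Λ' d k z = Λ d (σ k) z) := by
  have hcancel : Function.Injective fun B : Matrix (Fin K) (Fin K) ℝ => ΓX * B :=
    mul_right_injective_of_rank_eq_card (by rw [hΓX_rank, Fintype.card_fin])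
  have hslice : ∀ d y, ΓX * diagonal (ΓY d y) * Λ d = ΓX' * diagonal (ΓY' d y) * Λ' d :=
    fun d y => ext fun x z => by simp only [mul_diagonal_mul_apply, heq]
  have hmix : ∀ d, ΓX * Λ d = ΓX' * Λ' d := fun d => by
    rw [← sum_mul_diagonal_mul_eq_mul _ _ (hΓY_sum d),
      ← sum_mul_diagonal_mul_eq_mul _ _ (hΓY'_sum d)]
    exact sum_congr rfl fun y _ => hslice d y
  obtain ⟨R, hX⟩ : ∃ R, ΓX' = ΓX * R := ⟨Λ 0 * (Λ' 0)⁻¹, by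
    rw [← Matrix.mul_assoc, hmix 0, mul_nonsing_inv_cancel_right _ _
      ((isUnit_iff_isUnit_det _).1 (hΛ'_inv 0))]⟩
  have hΛ : ∀ d, Λ d = R * Λ' d := fun d => hcancel <| by
    simp only [hmix d, hX, Matrix.mul_assoc]
  have hcomm : ∀ d y, diagonal (ΓY d y) * R = R * diagonal (ΓY' d y) := fun d y =>
    (hΛ'_inv d).mul_right_cancel <| hcancel <| by
      simpa only [hX, hΛ d, Matrix.mul_assoc] using hslice d y
  have hR : ∀ j, ∑ k, R k j = 1 := fun j => by
    rw [← sum_mul_apply_of_sum_eq_one hΓX_sum, ← hX, hΓX'_sum]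
  obtain ⟨σ, rfl⟩ := exists_perm_of_diagonal_mul_eq_mul_diagonal (G := ΓY 0) (G' := ΓY' 0)
    (Function.injective_iff_pairwise_ne.2 fun k k' hne h =>
      (hnre k k' hne).1.elim fun y hy => hy (congrFun h y))
    (Function.injective_iff_pairwise_ne.2 fun k k' hne h =>
      (hnre' k k' hne).1.elim fun y hy => hy (congrFun h y))
    (hcomm 0) hR
  refine ⟨σ, fun k => ⟨fun x => ?_, fun d y => ?_, fun d z => ?_⟩⟩
  · simp [hX, PEquiv.mul_toMatrix_toPEquiv]
  · exact (eq_of_diagonal_mul_eq_mul_diagonal (hcomm d y) (by simp [PEquiv.toMatrix_apply])).symm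
  · simp [hΛ, PEquiv.toMatrix_toPEquiv_mul]

/-- uniqueness up to permutation of the latent states in the
finite-mixture factorization `H_d[(y,x),z] = ∑ k Γ_{Y,d}[y,k] Γ_X[x,k] Λ_d[k,z]`. -/
theorem nmf_identification_up_to_permutation
    (K MX MY : ℕ) (hK : 0 < K) (hMY : 0 < MY) (hMX : K ≤ MX)
    (ΓX ΓX' : Matrix (Fin MX) (Fin K) ℝ)
    (ΓY ΓY' : Fin 2 → Matrix (Fin MY) (Fin K) ℝ)
    (Λ Λ' : Fin 2 → Matrix (Fin K) (Fin K) ℝ)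
    -- column-stochasticity
    (hΓX_nonneg : ∀ x k, 0 ≤ ΓX x k) (hΓX_sum : ∀ k, ∑ x, ΓX x k = 1)
    (hΓX'_nonneg : ∀ x k, 0 ≤ ΓX' x k) (hΓX'_sum : ∀ k, ∑ x, ΓX' x k = 1)
    (hΓY_nonneg : ∀ d y k, 0 ≤ ΓY d y k) (hΓY_sum : ∀ d k, ∑ y, ΓY d y k = 1)
    (hΓY'_nonneg : ∀ d y k, 0 ≤ ΓY' d y k) (hΓY'_sum : ∀ d k, ∑ y, ΓY' d y k = 1)
    (hΛ_nonneg : ∀ d k z, 0 ≤ Λ d k z) (hΛ_sum : ∀ d z, ∑ k, Λ d k z = 1)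
    (hΛ'_nonneg : ∀ d k z, 0 ≤ Λ' d k z) (hΛ'_sum : ∀ d z, ∑ k, Λ' d k z = 1)
    -- full rank conditions
    (hΓX_rank : ΓX.rank = K) (hΓX'_rank : ΓX'.rank = K)
    (hΛ_inv : ∀ d, IsUnit (Λ d)) (hΛ'_inv : ∀ d, IsUnit (Λ' d))
    -- no repeated eigenvalue
    (hnre : ∀ k k' : Fin K, k ≠ k' →
      (∃ y, ΓY 0 y k ≠ ΓY 0 y k') ∧ (∃ y', ΓY 1 y' k ≠ ΓY 1 y' k'))
    (hnre' : ∀ k k' : Fin K, k ≠ k' →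
      (∃ y, ΓY' 0 y k ≠ ΓY' 0 y k') ∧ (∃ y', ΓY' 1 y' k ≠ ΓY' 1 y' k'))
    -- the two factorizations give the same observed arrays
    (heq : ∀ (d : Fin 2) (y : Fin MY) (x : Fin MX) (z : Fin K),
      ∑ k, ΓY d y k * ΓX x k * Λ d k z = ∑ k, ΓY' d y k * ΓX' x k * Λ' d k z) :
    ∃ σ : Equiv.Perm (Fin K), ∀ k : Fin K,
      (∀ x, ΓX' x k = ΓX x (σ k)) ∧
      (∀ d y, ΓY' d y k = ΓY d y (σ k)) ∧
      (∀ d z, Λ' d k z = Λ d (σ k) z) :=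
  nmf_identification_up_to_permutation_general K MX MY ΓX ΓX' ΓY ΓY' Λ Λ' hΓX_sum hΓX'_sum hΓY_sum
    hΓY'_sum hΓX_rank hΛ'_inv hnre hnre' heq
end

section
/- Let M, K be positive integers, let Γ and Ĝ be real M×K matrices, and let Λ and Λ̂ be real K×K matrices. Suppose Γᵀ·Ĝ and Λ̂ are invertible, and set A = Λ·Λ̂⁻¹. Then ‖Ĝ − Γ·A‖_F ≤ ‖Ĝ·Λ̂ − Γ·Λ‖_F · ‖(Γᵀ·Ĝ·Λ̂)⁻¹‖_F · ‖Γᵀ·Ĝ‖_F. -/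
open Matrix Finset

/-- The Frobenius norm of a real matrix. -/
noncomputable def frobeniusNorm' {m n : Type*} [Fintype m] [Fintype n]
    (A : Matrix m n ℝ) : ℝ :=
  Real.sqrt (∑ i, ∑ j, (A i j) ^ 2)

/-!
Since `Λ̂` and `ΓᵀĜ` are invertible, `Ĝ - ΓΛΛ̂⁻¹ = (ĜΛ̂ - ΓΛ) Λ̂⁻¹ (ΓᵀĜ)⁻¹ (ΓᵀĜ)
= (ĜΛ̂ - ΓΛ) (ΓᵀĜΛ̂)⁻¹ (ΓᵀĜ)`, and the bound is submultiplicativity of the Frobenius norm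
applied twice.
-/

attribute [local instance] Matrix.frobeniusNormedAddCommGroup

section FrobeniusNorm

variable {l m n : Type*} [Fintype l] [Fintype m] [Fintype n]

lemma frobeniusNorm'_eq_norm (A : Matrix m n ℝ) : frobeniusNorm' A = ‖A‖ := by
  rw [frobenius_norm_def, frobeniusNorm', Real.sqrt_eq_rpow]
  simp only [Real.norm_eq_abs, Real.rpow_two, sq_abs]

lemma frobeniusNorm'_mul_le (A : Matrix l m ℝ) (B : Matrix m n ℝ) :
    frobeniusNorm' (A * B) ≤ frobeniusNorm' A * frobeniusNorm' B := by
  simp only [frobeniusNorm'_eq_norm]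
  exact frobenius_norm_mul A B

lemma frobeniusNorm'_nonneg (A : Matrix m n ℝ) : 0 ≤ frobeniusNorm' A :=
  Real.sqrt_nonneg _

lemma frobeniusNorm'_mul_mul_le {k : Type*} [Fintype k]
    (A : Matrix k l ℝ) (B : Matrix l m ℝ) (C : Matrix m n ℝ) :
    frobeniusNorm' (A * B * C)
      ≤ frobeniusNorm' A * frobeniusNorm' B * frobeniusNorm' C :=
  (frobeniusNorm'_mul_le _ _).trans <|
    mul_le_mul_of_nonneg_right (frobeniusNorm'_mul_le _ _) (frobeniusNorm'_nonneg _)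

end FrobeniusNorm

lemma Matrix.sub_mul_mul_inv_eq {m n R : Type*} [Fintype n] [DecidableEq n] [CommRing R]
    (X Y : Matrix m n R) (Λ B C : Matrix n n R) (hB : IsUnit B) (hC : IsUnit C) :
    X - Y * (Λ * B⁻¹) = (X * B - Y * Λ) * (C * B)⁻¹ * C := by
  rw [Matrix.mul_inv_rev, Matrix.mul_assoc, Matrix.mul_assoc,
    Matrix.nonsing_inv_mul _ ((isUnit_iff_isUnit_det C).mp hC), Matrix.mul_one, Matrix.sub_mul,
    Matrix.mul_assoc, Matrix.mul_nonsing_inv _ ((isUnit_iff_isUnit_det B).mp hB), Matrix.mul_one,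
    Matrix.mul_assoc]

theorem nmf_step2_bound_general
    (M K : ℕ)
    (Γ Ghat : Matrix (Fin M) (Fin K) ℝ)
    (Λ Λhat : Matrix (Fin K) (Fin K) ℝ)
    (hGG : IsUnit (Γᵀ * Ghat)) (hΛhat : IsUnit Λhat)
    (A : Matrix (Fin K) (Fin K) ℝ) (hA : A = Λ * Λhat⁻¹) :
    frobeniusNorm' (Ghat - Γ * A)
      ≤ frobeniusNorm' (Ghat * Λhat - Γ * Λ)
        * frobeniusNorm' ((Γᵀ * Ghat * Λhat)⁻¹)
        * frobeniusNorm' (Γᵀ * Ghat) := by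
  rw [hA, Matrix.sub_mul_mul_inv_eq Ghat Γ Λ Λhat (Γᵀ * Ghat) hΛhat hGG]
  exact frobeniusNorm'_mul_mul_le _ _ _

/-- the deterministic bound in Step 2 of the consistency proof:
`‖Ĝ − Γ·A‖_F ≤ ‖Ĝ·Λ̂ − Γ·Λ‖_F · ‖(Γᵀ·Ĝ·Λ̂)⁻¹‖_F · ‖Γᵀ·Ĝ‖_F` with `A = Λ·Λ̂⁻¹`. -/
theorem nmf_step2_bound
    (M K : ℕ) (hM : 0 < M) (hK : 0 < K)
    (Γ Ghat : Matrix (Fin M) (Fin K) ℝ)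
    (Λ Λhat : Matrix (Fin K) (Fin K) ℝ)
    (hGG : IsUnit (Γᵀ * Ghat)) (hΛhat : IsUnit Λhat)
    (A : Matrix (Fin K) (Fin K) ℝ) (hA : A = Λ * Λhat⁻¹) :
    frobeniusNorm' (Ghat - Γ * A)
      ≤ frobeniusNorm' (Ghat * Λhat - Γ * Λ)
        * frobeniusNorm' ((Γᵀ * Ghat * Λhat)⁻¹)
        * frobeniusNorm' (Γᵀ * Ghat) :=
  nmf_step2_bound_general M K Γ Ghat Λ Λhat hGG hΛhat A hA
end

section
/- Let K ≥ 2 be an integer, let a ∈ ℝ^K with ∑_{k=1}^K a_k = 1, and let 0 < δ ≤ 1. If ‖a − e_k‖₂ ≥ δ for every k ∈ {1,…,K}, then there exist distinct indices j ≠ j' such that |a_j| ≥ 1/K and |a_{j'}| ≥ δ/(2K). -/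
open Finset

/-- The Euclidean norm of a real vector. -/
noncomputable def euclNorm {n : Type*} [Fintype n] (v : n → ℝ) : ℝ :=
  Real.sqrt (∑ i, (v i) ^ 2)

lemma euclNorm_le_sum_abs {n : Type*} [Fintype n] (v : n → ℝ) :
    euclNorm v ≤ ∑ i, |v i| := by
  have h1 : ∑ i, (v i) ^ 2 ≤ (∑ i, |v i|) ^ 2 := by
    have := Finset.sum_sq_le_sq_sum_of_nonneg (s := Finset.univ)
      (f := fun i => |v i|) (fun i _ => abs_nonneg _)
    simpa [sq_abs] using this
  have h2 : euclNorm v ≤ Real.sqrt ((∑ i, |v i|) ^ 2) :=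
    Real.sqrt_le_sqrt h1
  calc euclNorm v ≤ Real.sqrt ((∑ i, |v i|) ^ 2) := h2
    _ = abs (∑ i, |v i|) := Real.sqrt_sq_eq_abs _
    _ = ∑ i, |v i| := abs_of_nonneg (Finset.sum_nonneg fun i _ => abs_nonneg _)

/-- a vector summing to one that is at Euclidean distance at least `δ`
from every standard basis vector has two distinct entries bounded away from zero,
one of size at least `1/K` and another of size at least `δ/(2K)`. -/
theorem two_entries_away_from_zero
    (K : ℕ) (hK : 2 ≤ K) (a : Fin K → ℝ) (hsum : ∑ k, a k = 1)
    (δ : ℝ) (hδ0 : 0 < δ) (hδ1 : δ ≤ 1)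
    (hfar : ∀ k : Fin K, δ ≤ euclNorm (fun i => a i - if i = k then 1 else 0)) :
    ∃ j j' : Fin K, j ≠ j' ∧ 1 / (K : ℝ) ≤ |a j| ∧ δ / (2 * K) ≤ |a j'| := by
  have hKpos : (0 : ℝ) < K := by positivity
  -- find j with a j ≥ 1/K
  have hne : (Finset.univ : Finset (Fin K)).Nonempty := by
    have : Nonempty (Fin K) := ⟨⟨0, by omega⟩⟩
    exact Finset.univ_nonempty
  obtain ⟨j, -, hj⟩ : ∃ j ∈ Finset.univ, (1 / (K : ℝ)) ≤ a j := by
    apply Finset.exists_le_of_sum_le hne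
    rw [hsum, Finset.sum_const, Finset.card_univ, Fintype.card_fin, nsmul_eq_mul]
    rw [mul_one_div, div_self (ne_of_gt hKpos)]
  have hjabs : 1 / (K : ℝ) ≤ |a j| := hj.trans (le_abs_self _)
  -- by contradiction: all other entries small
  by_contra hcon
  push_neg at hcon
  have hsmall : ∀ i ∈ Finset.univ.erase j, |a i| < δ / (2 * K) := by
    intro i hi
    have hij : j ≠ i := (Finset.ne_of_mem_erase hi).symm
    have := hcon j i hij hjabs
    linarith
  have hcardK : (Finset.univ.erase j).card = K - 1 := by
    simp [Finset.card_erase_of_mem]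
  have hne' : (Finset.univ.erase j).Nonempty := by
    rw [← Finset.card_pos, hcardK]; omega
  have hsum_small : ∑ i ∈ Finset.univ.erase j, |a i| < δ / 2 := by
    have h1 : ∑ i ∈ Finset.univ.erase j, |a i|
        < ∑ _i ∈ Finset.univ.erase j, δ / (2 * K) :=
      Finset.sum_lt_sum_of_nonempty hne' hsmall
    have h2 : ∑ _i ∈ Finset.univ.erase j, δ / (2 * K)
        = ((K : ℝ) - 1) * (δ / (2 * K)) := by
      rw [Finset.sum_const, hcardK, nsmul_eq_mul]
      have : ((K - 1 : ℕ) : ℝ) = (K : ℝ) - 1 := by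
        push_cast [Nat.cast_sub (by omega : 1 ≤ K)]; ring
      rw [this]
    have h3 : ((K : ℝ) - 1) * (δ / (2 * K)) < (K : ℝ) * (δ / (2 * K)) := by
      have : (0:ℝ) < δ / (2 * K) := by positivity
      nlinarith
    have h4 : (K : ℝ) * (δ / (2 * K)) = δ / 2 := by
      field_simp
    linarith
  -- sum over erase j equals 1 - a j
  have hrest : ∑ i ∈ Finset.univ.erase j, a i = 1 - a j := by
    have := Finset.add_sum_erase Finset.univ a (Finset.mem_univ j)
    linarith [this.symm ▸ hsum]
  have hjdev : |a j - 1| < δ / 2 := by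
    have : |a j - 1| = |∑ i ∈ Finset.univ.erase j, a i| := by
      rw [hrest, abs_sub_comm]
    rw [this]
    calc |∑ i ∈ Finset.univ.erase j, a i| ≤ ∑ i ∈ Finset.univ.erase j, |a i| :=
          Finset.abs_sum_le_sum_abs _ _
      _ < δ / 2 := hsum_small
  -- bound the euclidean distance to e_j
  have hbound : euclNorm (fun i => a i - if i = j then 1 else 0) < δ := by
    have h1 := euclNorm_le_sum_abs (fun i => a i - if i = j then 1 else 0)
    have h2 : ∑ i, |a i - if i = j then 1 else 0|
        = |a j - 1| + ∑ i ∈ Finset.univ.erase j, |a i| := by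
      rw [← Finset.add_sum_erase Finset.univ _ (Finset.mem_univ j)]
      simp only [if_pos rfl]
      congr 1
      apply Finset.sum_congr rfl
      intro i hi
      rw [if_neg (Finset.ne_of_mem_erase hi), sub_zero]
    rw [h2] at h1
    linarith
  exact absurd (hfar j) (not_le.mpr hbound)
end

section
/- Let K ≥ 2 be an integer and 0 < δ < 1. Let Λ̂ be a K×K real matrix with nonnegative entries each of whose columns sums to one, let A be a K×K real matrix such that each column a_{·k} of A satisfies min_{k'} ‖a_{·k} − e_{k'}‖₂ ≤ δ/K, and set Λ = A·Λ̂. Suppose that for every row index j ∈ {1,…,K} there exists a column index m with Λ[j,m] ≥ δ. Then there exists a bijection π of {1,…,K} such that for every k: ‖a_{·k} − e_{π(k)}‖₂ ≤ δ/K, and moreover π(k) is the unique index k' minimizing ‖a_{·k} − e_{k'}‖₂. -/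
/-!
Every column of `A` has at most one coordinate far from `0`, so a row `j` that is the nearest
index of no column has all entries at most `δ/K`; then so does row `j` of `Λ = A Λ̂`, each entry
being a convex combination of them, contradicting `δ ≤ Λ j m`. Hence the nearest-index map is
onto, and so a permutation of `Fin K`. It is the unique minimiser because a column within
`r < 1/2` of `e_a` has `b`-th coordinate at most `r` for `b ≠ a`, so it lies at distance at least
`1 - r > r` from `e_b`.
-/

open Matrix Finset

lemma mul_apply_le_of_row_le {m n p R : Type*} [Fintype n] [Semiring R] [PartialOrder R]
    [IsOrderedRing R] {A : Matrix m n R} {B : Matrix n p R} {j : m} {r : R}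
    (hA : ∀ i, A j i ≤ r) (hB_nonneg : ∀ i k, 0 ≤ B i k) (hB_sum : ∀ k, ∑ i, B i k = 1)
    (k : p) : (A * B) j k ≤ r :=
  calc (A * B) j k = ∑ i, A j i * B i k := mul_apply
    _ ≤ ∑ i, r * B i k := sum_le_sum fun i _ => mul_le_mul_of_nonneg_right (hA i) (hB_nonneg i k)
    _ = r := by rw [← mul_sum, hB_sum, mul_one]

section ElementaryVectors

variable {n : Type*} [Fintype n]

lemma abs_le_euclNorm (v : n → ℝ) (i : n) : |v i| ≤ euclNorm v := by
  rw [← Real.sqrt_sq_eq_abs]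
  exact Real.sqrt_le_sqrt <|
    Finset.single_le_sum (f := fun j => (v j) ^ 2) (fun j _ => sq_nonneg _) (mem_univ i)

variable [DecidableEq n]

lemma abs_apply_le_of_euclNorm_sub_single_le {v : n → ℝ} {a : n} {r : ℝ}
    (hv : euclNorm (fun i => v i - if i = a then 1 else 0) ≤ r) {j : n} (hj : j ≠ a) :
    |v j| ≤ r := by
  simpa [hj] using (abs_le_euclNorm (fun i => v i - if i = a then 1 else 0) j).trans hv

lemma euclNorm_sub_single_lt_of_ne {v : n → ℝ} {a : n} {r : ℝ}
    (hv : euclNorm (fun i => v i - if i = a then 1 else 0) ≤ r) (hr : r < 1 / 2)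
    {b : n} (hb : b ≠ a) :
    euclNorm (fun i => v i - if i = a then 1 else 0)
      < euclNorm (fun i => v i - if i = b then 1 else 0) := by
  have hvb := abs_le.mp (abs_apply_le_of_euclNorm_sub_single_le hv hb)
  have hdist : |v b - 1| ≤ euclNorm (fun i => v i - if i = b then 1 else 0) := by
    simpa using abs_le_euclNorm (fun i => v i - if i = b then 1 else 0) b
  linarith [neg_abs_le (v b - 1)]

lemma surjective_of_euclNorm_sub_single_le {A B : Matrix n n ℝ} {σ : n → n} {r δ : ℝ}
    (hσ : ∀ k, euclNorm (fun i => A i k - if i = σ k then 1 else 0) ≤ r) (hrδ : r < δ)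
    (hB_nonneg : ∀ i k, 0 ≤ B i k) (hB_sum : ∀ k, ∑ i, B i k = 1)
    (hrow : ∀ j, ∃ k, δ ≤ (A * B) j k) :
    Function.Surjective σ := by
  intro j
  by_contra! hj
  obtain ⟨k, hk⟩ := hrow j
  have hrow_le : ∀ i, A j i ≤ r := fun i =>
    (abs_le.mp (abs_apply_le_of_euclNorm_sub_single_le (hσ i) (hj i).symm)).2
  linarith [mul_apply_le_of_row_le hrow_le hB_nonneg hB_sum k]

end ElementaryVectors

/-- when every column of the recombination matrix `A` is within `δ/K`
of some elementary vector and every row of `Λ = A·Λ̂` contains an entry at least `δ`,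
the nearest-elementary-vector assignment is a well-defined permutation. -/
theorem nearest_elementary_vector_is_permutation
    (K : ℕ) (hK : 2 ≤ K) (δ : ℝ) (hδ0 : 0 < δ) (hδ1 : δ < 1)
    (Λhat A : Matrix (Fin K) (Fin K) ℝ)
    (hΛhat_nonneg : ∀ i j, 0 ≤ Λhat i j) (hΛhat_sum : ∀ j, ∑ i, Λhat i j = 1)
    (hA : ∀ k : Fin K, ∃ k' : Fin K,
      euclNorm (fun i => A i k - if i = k' then 1 else 0) ≤ δ / K)
    (hrow : ∀ j : Fin K, ∃ m : Fin K, δ ≤ (A * Λhat) j m) :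
    ∃ π : Equiv.Perm (Fin K), ∀ k : Fin K,
      euclNorm (fun i => A i k - if i = π k then 1 else 0) ≤ δ / K ∧
      ∀ k' : Fin K, k' ≠ π k →
        euclNorm (fun i => A i k - if i = π k then 1 else 0)
          < euclNorm (fun i => A i k - if i = k' then 1 else 0) := by
  have hK2 : (2 : ℝ) ≤ K := by exact_mod_cast hK
  have hδK : δ / K < δ := div_lt_self hδ0 (by linarith)
  have hδK_half : δ / K < 1 / 2 := by
    rw [div_lt_iff₀ (by linarith)]
    linarith
  choose σ hσ using hA
  have hσ_bij : Function.Bijective σ := Finite.surjective_iff_bijective.mp <|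
    surjective_of_euclNorm_sub_single_le hσ hδK hΛhat_nonneg hΛhat_sum hrow
  exact ⟨Equiv.ofBijective σ hσ_bij, fun k =>
    ⟨hσ k, fun _ hk' => euclNorm_sub_single_lt_of_ne (hσ k) hδK_half hk'⟩⟩
end
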